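/- Let K = max_u ξ_u(0) − min_u ξ_u(0) be the initial discrepancy. Then: (a) in the Node Model on a connected graph G with maximum degree d_max, the degree-weighted average M(t) = Σ_u (d_u/(2m))ξ_u(t) satisfies Var(M(t)) ≤ t·( d_max·K / (2m) )² for all t ≥ 0; and (b) in the Edge Model on a connected graph G, the average Avg(t) = (1/n)Σ_u ξ_u(t) satisfies Var(Avg(t)) ≤ (t/n²)·K² for all t ≥ 0. -/

import Mathlib

/-!
`M` in the Node Model and `Avg` in the Edge Model are martingales. Averaged over one step, their
change is a multiple of `∑ᵤ ∑_{v ~ u} (ξ_v - ξ_u) = 0`: in the Node Model because a uniformly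
random `k`-subset of the neighbours of `u` has, in expectation, the neighbour mean as its mean, and
the weight `d_u / 2m` cancels the `1 / d_u`; in the Edge Model because reversing directed edges is a
bijection. Each update replaces a value by a convex combination of values, so all values stay in
`[min ξ(0), max ξ(0)]`, and a single step moves `M` by at most `d_max K / 2m` and `Avg` by at most
`K / n`. The first `t` steps have a product law, so conditioning on them shows that the second
moment of a martingale with increments bounded by `B` grows by at most `B²` per step.
-/

open MeasureTheory ProbabilityTheory Finset

instance finsetFinMeasurableSpace (n : ℕ) : MeasurableSpace (Finset (Fin n)) := ⊤

/-- A step of the Node Model: selected node together with the selected set of neighbours. -/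
abbrev NodeStep (n : ℕ) := Fin n × Finset (Fin n)

/-- Distribution of a single step of the Node Model: a uniformly random node `u`,
together with a uniformly random set of `k` of its neighbours. -/
noncomputable def nodeStepPMF {n : ℕ} (G : SimpleGraph (Fin n)) [DecidableRel G.Adj]
    (hn : Nonempty (Fin n)) (k : ℕ) (hk : ∀ u, k ≤ G.degree u) : PMF (NodeStep n) :=
  letI := hn
  (PMF.uniformOfFintype (Fin n)).bind fun u =>
    (PMF.uniformOfFinset ((G.neighborFinset u).powersetCard k)
      (Finset.powersetCard_nonempty.2 (hk u))).map fun S => (u, S)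

/-- One update of the Node Model: the selected node `s.1` replaces its value by an
`α`-fraction of its own value plus a `(1-α)/k`-fraction of the values of the selected
neighbours `s.2`. -/
noncomputable def nodeUpdate {n : ℕ} (α : ℝ) (k : ℕ) (s : NodeStep n) (ξ : Fin n → ℝ) :
    Fin n → ℝ :=
  fun w => if w = s.1 then α * ξ w + ((1 - α) / k) * ∑ v ∈ s.2, ξ v else ξ w

/-- The trajectory of node values of the Node Model, given the sequence of step choices. -/
noncomputable def nodeTraj {n : ℕ} (α : ℝ) (k : ℕ) (ξ0 : Fin n → ℝ)
    (ω : ℕ → NodeStep n) : ℕ → Fin n → ℝ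
  | 0 => ξ0
  | t + 1 => nodeUpdate α k (ω t) (nodeTraj α k ξ0 ω t)

/-- Stationary distribution of the lazy random walk: `π u = d_u / (2m)`. -/
noncomputable def piRW {n : ℕ} (G : SimpleGraph (Fin n)) [DecidableRel G.Adj] (u : Fin n) : ℝ :=
  (G.degree u : ℝ) / (2 * (G.edgeFinset.card : ℝ))

/-- The potential `φ(ξ) = (1/2) Σ_{u,v} π_u π_v (ξ_u - ξ_v)²`. -/
noncomputable def phi {n : ℕ} (G : SimpleGraph (Fin n)) [DecidableRel G.Adj]
    (ξ : Fin n → ℝ) : ℝ :=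
  (1 / 2) * ∑ u, ∑ v, piRW G u * piRW G v * (ξ u - ξ v) ^ 2

/-- Transition matrix of the lazy random walk on `G`. -/
noncomputable def lazyP {n : ℕ} (G : SimpleGraph (Fin n)) [DecidableRel G.Adj] :
    Matrix (Fin n) (Fin n) ℝ :=
  Matrix.of fun i j =>
    if i = j then 1 / 2 else if G.Adj i j then 1 / (2 * (G.degree i : ℝ)) else 0

/-- `lam` is the second-largest eigenvalue of the (reversible) lazy random-walk matrix `P`:
it is the largest eigenvalue attained on the space of vectors `π`-orthogonal to `1`. -/
def IsSecondEigenvalueP {n : ℕ} (G : SimpleGraph (Fin n)) [DecidableRel G.Adj]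
    (lam : ℝ) : Prop :=
  (∃ f : Fin n → ℝ, f ≠ 0 ∧ (lazyP G).mulVec f = lam • f ∧ ∑ x, piRW G x * f x = 0) ∧
  ∀ lam' : ℝ,
    (∃ f : Fin n → ℝ, f ≠ 0 ∧ (lazyP G).mulVec f = lam' • f ∧ ∑ x, piRW G x * f x = 0) →
      lam' ≤ lam


/-- A step of the Edge Model: a directed edge, i.e. an ordered pair of adjacent nodes. -/
abbrev EdgeStep (n : ℕ) := Fin n × Fin n

/-- A connected graph on at least two vertices has a directed edge. -/
lemma exists_adj_pair {n : ℕ} (G : SimpleGraph (Fin n)) [DecidableRel G.Adj]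
    (hconn : G.Connected) (hn : 1 < n) :
    (Finset.univ.filter fun p : EdgeStep n => G.Adj p.1 p.2).Nonempty := by
  obtain ⟨w⟩ := hconn.preconnected ⟨0, by omega⟩ ⟨1, hn⟩
  cases w with
  | @cons _ v _ h _ => exact ⟨(_, v), by simpa using h⟩

/-- Distribution of a single step of the Edge Model: a uniformly random directed edge. -/
noncomputable def edgeStepPMF {n : ℕ} (G : SimpleGraph (Fin n)) [DecidableRel G.Adj]
    (hconn : G.Connected) (hn : 1 < n) : PMF (EdgeStep n) :=
  PMF.uniformOfFinset _ (exists_adj_pair G hconn hn)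

/-- One update of the Edge Model: for the chosen directed edge `e = (u,v)`, node `u`
replaces its value by `α ξ_u + (1-α) ξ_v`. -/
noncomputable def edgeUpdate {n : ℕ} (α : ℝ) (e : EdgeStep n) (ξ : Fin n → ℝ) : Fin n → ℝ :=
  fun w => if w = e.1 then α * ξ w + (1 - α) * ξ e.2 else ξ w

/-- The trajectory of node values of the Edge Model, given the sequence of step choices. -/
noncomputable def edgeTraj {n : ℕ} (α : ℝ) (ξ0 : Fin n → ℝ) (ω : ℕ → EdgeStep n) :
    ℕ → Fin n → ℝ
  | 0 => ξ0
  | t + 1 => edgeUpdate α (ω t) (edgeTraj α ξ0 ω t)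

/-- The degree-weighted average `M(ξ) = Σ_u (d_u/(2m)) ξ_u`. -/
noncomputable def Mdeg {n : ℕ} (G : SimpleGraph (Fin n)) [DecidableRel G.Adj]
    (ξ : Fin n → ℝ) : ℝ :=
  ∑ u, piRW G u * ξ u

/-- The plain average `Avg(ξ) = (1/n) Σ_u ξ_u`. -/
noncomputable def Avg {n : ℕ} (ξ : Fin n → ℝ) : ℝ :=
  (1 / (n : ℝ)) * ∑ u, ξ u

section Variance

variable {Ω : Type*} {mΩ : MeasurableSpace Ω} {μ : Measure Ω} [IsProbabilityMeasure μ]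

lemma variance_le_integral_sub_sq {X : Ω → ℝ} (hX : AEStronglyMeasurable X μ) (c : ℝ) :
    variance X μ ≤ ∫ ω, (X ω - c) ^ 2 ∂μ := by
  rw [← variance_sub_const hX c]
  exact variance_le_expectation_sq (hX.sub aestronglyMeasurable_const)

lemma integral_sub_sq_le_of_abs_sub_integral_le {X : Ω → ℝ} (hX : MemLp X 2 μ) {B : ℝ}
    (hB : ∀ᵐ ω ∂μ, |X ω - μ[X]| ≤ B) (c : ℝ) :
    ∫ ω, (X ω - c) ^ 2 ∂μ ≤ (μ[X] - c) ^ 2 + B ^ 2 := by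
  have hvar : variance X μ ≤ B ^ 2 := by
    rw [variance_eq_integral hX.aemeasurable]
    calc ∫ ω, (X ω - μ[X]) ^ 2 ∂μ ≤ ∫ _, B ^ 2 ∂μ :=
          integral_mono_ae (hX.sub (memLp_const _)).integrable_sq (integrable_const _)
            (hB.mono fun ω h => sq_le_sq' (abs_le.1 h).1 (abs_le.1 h).2)
      _ = B ^ 2 := by simp
  -- `Var[X] = Var[X - c] = E[(X - c)²] - (E[X] - c)²`
  have hshift := variance_eq_sub (X := fun ω => X ω - c) (hX.sub (memLp_const c))
  rw [variance_sub_const hX.aestronglyMeasurable, integral_sub (hX.integrable one_le_two)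
    (integrable_const c)] at hshift
  simp only [Pi.pow_apply, integral_const, probReal_univ, one_smul] at hshift
  linarith

end Variance

section Pi

variable {S : Type*} [MeasurableSpace S] (μ : Measure S) [IsProbabilityMeasure μ]

lemma integral_pi_fin_succ [Fintype S] [MeasurableSingletonClass S] {t : ℕ}
    (g : (Fin (t + 1) → S) → ℝ) :
    ∫ a, g a ∂Measure.pi (fun _ => μ)
      = ∫ a, ∫ s, g (Fin.snoc a s) ∂μ ∂Measure.pi (fun _ : Fin t => μ) := by
  rw [← (measurePreserving_piFinSuccAbove (fun _ => μ) (Fin.last t)).symm.integral_comp',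
    integral_prod_symm _ Integrable.of_finite]
  simp_rw [MeasurableEquiv.piFinSuccAbove_symm_apply, Fin.insertNthEquiv, Equiv.coe_fn_mk,
    Fin.insertNth_last']

lemma ae_pi_forall_mem {ι : Type*} [Fintype ι] {Good : Set S} (hGood : ∀ᵐ s ∂μ, s ∈ Good) :
    ∀ᵐ a ∂Measure.pi (fun _ : ι => μ), ∀ i, a i ∈ Good :=
  ae_all_iff.2 fun i => (measurePreserving_eval (fun _ => μ) i).quasiMeasurePreserving.ae hGood

end Pi

lemma map_prefix_eq_pi {Ω S : Type*} {mΩ : MeasurableSpace Ω} {Pr : Measure Ω}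
    [MeasurableSpace S] {μ : Measure S} {steps : ℕ → Ω → S}
    (hmeas : ∀ t, Measurable (steps t)) (hiid : iIndepFun steps Pr)
    (hdist : ∀ t, Pr.map (steps t) = μ) (t : ℕ) :
    Pr.map (fun ω (i : Fin t) => steps i ω) = Measure.pi fun _ => μ := by
  rw [iIndepFun.map_fun_eq_pi_map (f := fun i : Fin t => steps i)
    (fun i => (hmeas i).aemeasurable) (hiid.precomp Fin.val_injective)]
  simp only [hdist]

section RandomIteration

variable {S State : Type*} (x0 : State) (upd : S → State → State)

def runSteps (t : ℕ) (a : Fin t → S) : State :=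
  Fin.foldl t (fun x i => upd (a i) x) x0

lemma runSteps_snoc {t : ℕ} (a : Fin t → S) (s : S) :
    runSteps x0 upd (t + 1) (Fin.snoc a s) = upd s (runSteps x0 upd t a) := by
  simp [runSteps, Fin.foldl_succ_last]

lemma eq_runSteps (X : (ℕ → S) → ℕ → State) (hX0 : ∀ ω, X ω 0 = x0)
    (hXsucc : ∀ ω t, X ω (t + 1) = upd (ω t) (X ω t)) (ω : ℕ → S) (t : ℕ) :
    X ω t = runSteps x0 upd t fun i => ω i := by
  induction t with
  | zero => simp [hX0, runSteps]
  | succ t ih => rw [hXsucc, ih]; simp only [runSteps, Fin.foldl_succ_last]; rfl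

lemma runSteps_induction {Inv : State → Prop} {Good : Set S} (hInv0 : Inv x0)
    (hInv : ∀ x, Inv x → ∀ s ∈ Good, Inv (upd s x)) {t : ℕ} (a : Fin t → S)
    (ha : ∀ i, a i ∈ Good) : Inv (runSteps x0 upd t a) := by
  induction t with
  | zero => exact hInv0
  | succ t ih =>
    rw [runSteps, Fin.foldl_succ_last]
    exact hInv _ (ih (fun i => a i.castSucc) fun i => ha _) _ (ha _)

variable [Fintype S] [MeasurableSpace S] [MeasurableSingletonClass S]
  {μ : Measure S} [IsProbabilityMeasure μ] {f : State → ℝ}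
  {Inv : State → Prop} {Good : Set S} {B : ℝ}

theorem integral_runSteps_sub_sq_le (hGood : ∀ᵐ s ∂μ, s ∈ Good) (hInv0 : Inv x0)
    (hInv : ∀ x, Inv x → ∀ s ∈ Good, Inv (upd s x))
    (hmart : ∀ x, Inv x → ∫ s, f (upd s x) ∂μ = f x)
    (hbound : ∀ x, Inv x → ∀ s ∈ Good, |f (upd s x) - f x| ≤ B) (t : ℕ) :
    ∫ a, (f (runSteps x0 upd t a) - f x0) ^ 2 ∂Measure.pi (fun _ : Fin t => μ) ≤ t * B ^ 2 := by
  induction t with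
  | zero => simp [runSteps]
  | succ t ih =>
    have hstep : ∀ᵐ a ∂Measure.pi (fun _ : Fin t => μ),
        ∫ s, (f (upd s (runSteps x0 upd t a)) - f x0) ^ 2 ∂μ
          ≤ (f (runSteps x0 upd t a) - f x0) ^ 2 + B ^ 2 := by
      filter_upwards [ae_pi_forall_mem μ hGood] with a ha
      have hx := runSteps_induction x0 upd hInv0 hInv a ha
      rw [← hmart _ hx]
      refine integral_sub_sq_le_of_abs_sub_integral_le MemLp.of_discrete ?_ _
      filter_upwards [hGood] with s hs
      rw [hmart _ hx]
      exact hbound _ hx s hs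
    calc ∫ a, (f (runSteps x0 upd (t + 1) a) - f x0) ^ 2 ∂Measure.pi (fun _ => μ)
        = ∫ a, ∫ s, (f (upd s (runSteps x0 upd t a)) - f x0) ^ 2 ∂μ
            ∂Measure.pi (fun _ : Fin t => μ) := by
          simp only [integral_pi_fin_succ, runSteps_snoc]
      _ ≤ ∫ a, ((f (runSteps x0 upd t a) - f x0) ^ 2 + B ^ 2)
            ∂Measure.pi (fun _ : Fin t => μ) :=
          integral_mono_ae Integrable.of_finite Integrable.of_finite hstep
      _ ≤ t * B ^ 2 + B ^ 2 := by
          rw [integral_add Integrable.of_finite (integrable_const _)]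
          simpa using ih
      _ = (t + 1 : ℕ) * B ^ 2 := by push_cast; ring

theorem variance_le_of_martingale_increments_le {Ω : Type*} {mΩ : MeasurableSpace Ω}
    {Pr : Measure Ω} [IsProbabilityMeasure Pr] {steps : ℕ → Ω → S}
    (hmeas : ∀ t, Measurable (steps t)) (hiid : iIndepFun steps Pr)
    (hdist : ∀ t, Pr.map (steps t) = μ)
    (X : (ℕ → S) → ℕ → State) (hX0 : ∀ ω, X ω 0 = x0)
    (hXsucc : ∀ ω t, X ω (t + 1) = upd (ω t) (X ω t))
    (hGood : ∀ᵐ s ∂μ, s ∈ Good) (hInv0 : Inv x0)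
    (hInv : ∀ x, Inv x → ∀ s ∈ Good, Inv (upd s x))
    (hmart : ∀ x, Inv x → ∫ s, f (upd s x) ∂μ = f x)
    (hbound : ∀ x, Inv x → ∀ s ∈ Good, |f (upd s x) - f x| ≤ B) (t : ℕ) :
    variance (fun ω => f (X (fun i => steps i ω) t)) Pr ≤ t * B ^ 2 := by
  have hprefix : Measurable fun ω (i : Fin t) => steps i ω :=
    measurable_pi_lambda _ fun i => hmeas i
  have hg : Measurable fun a : Fin t → S => (f (runSteps x0 upd t a) - f x0) ^ 2 :=
    measurable_of_finite _
  simp_rw [eq_runSteps x0 upd X hX0 hXsucc]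
  calc variance (fun ω => f (runSteps x0 upd t fun i => steps i ω)) Pr
      ≤ ∫ ω, (f (runSteps x0 upd t fun i => steps i ω) - f x0) ^ 2 ∂Pr :=
        variance_le_integral_sub_sq ((measurable_of_finite
          (fun a => f (runSteps x0 upd t a))).comp hprefix).aestronglyMeasurable _
    _ = ∫ a, (f (runSteps x0 upd t a) - f x0) ^ 2 ∂Pr.map fun ω (i : Fin t) => steps i ω :=
        (integral_map hprefix.aemeasurable hg.aestronglyMeasurable).symm
    _ ≤ t * B ^ 2 := by
        rw [map_prefix_eq_pi hmeas hiid hdist]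
        exact integral_runSteps_sub_sq_le x0 upd hGood hInv0 hInv hmart hbound t

end RandomIteration

namespace PMF

variable {α β : Type*} [Fintype α] [MeasurableSpace β] [MeasurableSingletonClass β] [Fintype β]

lemma integral_bind_toMeasure (p : PMF α) (q : α → PMF β) (g : β → ℝ) :
    ∫ b, g b ∂(p.bind q).toMeasure = ∑ a, (p a).toReal * ∫ b, g b ∂(q a).toMeasure := by
  simp only [integral_eq_sum, bind_apply, tsum_fintype, smul_eq_mul, Finset.mul_sum]
  rw [Finset.sum_comm]
  refine Finset.sum_congr rfl fun b _ => ?_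
  rw [ENNReal.toReal_sum fun a _ => ENNReal.mul_ne_top (apply_ne_top p a) (apply_ne_top _ b),
    Finset.sum_mul]
  simp only [ENNReal.toReal_mul, mul_assoc]

lemma integral_map_toMeasure [MeasurableSpace α] [MeasurableSingletonClass α] (p : PMF α)
    (h : α → β) (g : β → ℝ) :
    ∫ b, g b ∂(p.map h).toMeasure = ∫ a, g (h a) ∂p.toMeasure := by
  rw [← toMeasure_map h p (measurable_of_finite h),
    integral_map (measurable_of_finite h).aemeasurable
      (measurable_of_finite g).aestronglyMeasurable]

lemma integral_uniformOfFinset_toMeasure (s : Finset β) (hs : s.Nonempty) (g : β → ℝ) :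
    ∫ b, g b ∂(uniformOfFinset s hs).toMeasure = (∑ b ∈ s, g b) / #s := by
  classical
  simp only [integral_eq_sum, uniformOfFinset_apply, smul_eq_mul, apply_ite ENNReal.toReal,
    ENNReal.toReal_inv, ENNReal.toReal_natCast, ENNReal.toReal_zero, ite_mul, zero_mul,
    Finset.sum_ite_mem, Finset.univ_inter, ← Finset.mul_sum]
  ring

end PMF

lemma Finset.sum_powersetCard_sum {ι : Type*} [DecidableEq ι] (A : Finset ι) {k : ℕ}
    (hk : 1 ≤ k) (g : ι → ℝ) :
    ∑ S ∈ A.powersetCard k, ∑ v ∈ S, g v = (#A - 1).choose (k - 1) * ∑ v ∈ A, g v := by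
  rw [Finset.sum_comm' (t' := A) (s' := fun v => (A.powersetCard k).filter (v ∈ ·))
    (by intro S v; simp only [mem_filter, mem_powersetCard]; grind), Finset.mul_sum]
  refine Finset.sum_congr rfl fun v hv => ?_
  have hcount := card_filter_powersetCard_subset {v} A k (by simpa using hv) (by simpa using hk)
  simp only [singleton_subset_iff, card_singleton] at hcount
  rw [sum_const, hcount, nsmul_eq_mul, mul_comm]

lemma Finset.sum_powersetCard_average {ι : Type*} [DecidableEq ι] (A : Finset ι) {k : ℕ}
    (hk : 1 ≤ k) (hkA : k ≤ #A) (g : ι → ℝ) :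
    (∑ S ∈ A.powersetCard k, (∑ v ∈ S, g v) / k) / ((#A).choose k) = (∑ v ∈ A, g v) / #A := by
  have hchoose : ((#A).choose k : ℝ) * k = #A * (#A - 1).choose (k - 1) := by
    obtain ⟨d, hd⟩ : ∃ d, #A = d + 1 := ⟨#A - 1, by omega⟩
    obtain ⟨j, rfl⟩ : ∃ j, k = j + 1 := ⟨k - 1, by omega⟩
    rw [hd]
    exact_mod_cast (Nat.add_one_mul_choose_eq d j).symm
  have hk0 : (k : ℝ) ≠ 0 := by positivity
  have hA0 : (#A : ℝ) ≠ 0 := by norm_cast; omega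
  have hC0 : ((#A).choose k : ℝ) ≠ 0 := by exact_mod_cast (Nat.choose_pos hkA).ne'
  rw [← Finset.sum_div, Finset.sum_powersetCard_sum A hk, div_div, div_eq_div_iff
    (mul_ne_zero hk0 hC0) hA0]
  linear_combination -(∑ v ∈ A, g v) * hchoose

lemma Finset.sum_div_mem_Icc {ι : Type*} {S : Finset ι} {k : ℕ} (hS : #S = k) (hk : 1 ≤ k)
    {x : ι → ℝ} {lo hi : ℝ} (hx : ∀ v ∈ S, x v ∈ Set.Icc lo hi) :
    (∑ v ∈ S, x v) / k ∈ Set.Icc lo hi := by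
  subst hS
  have hcard : (0 : ℝ) < #S := by exact_mod_cast hk
  rw [Set.mem_Icc, le_div_iff₀ hcard, div_le_iff₀ hcard, mul_comm lo, mul_comm hi,
    ← nsmul_eq_mul, ← nsmul_eq_mul]
  exact ⟨card_nsmul_le_sum S x lo fun v hv => (hx v hv).1,
    sum_le_card_nsmul S x hi fun v hv => (hx v hv).2⟩

section Relaxation

variable {ι : Type*} [DecidableEq ι]

lemma sum_mul_update_sub [Fintype ι] (c x : ι → ℝ) (u : ι) (z : ℝ) :
    ∑ w, c w * Function.update x u z w - ∑ w, c w * x w = c u * (z - x u) := by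
  rw [← Finset.sum_sub_distrib, ← Finset.sum_erase_add _ _ (Finset.mem_univ u),
    Finset.sum_eq_zero fun w hw => by simp [Function.update_of_ne (Finset.ne_of_mem_erase hw)]]
  simp [mul_sub]

variable {lo hi α : ℝ}

lemma convex_comb_mem_Icc (hα : α ∈ Set.Icc (0 : ℝ) 1) {a b : ℝ} (ha : a ∈ Set.Icc lo hi)
    (hb : b ∈ Set.Icc lo hi) : α * a + (1 - α) * b ∈ Set.Icc lo hi :=
  convex_Icc lo hi ha hb hα.1 (sub_nonneg.2 hα.2) (add_sub_cancel α 1)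

lemma abs_convex_comb_sub_le (hα : α ∈ Set.Icc (0 : ℝ) 1) {a b : ℝ} (ha : a ∈ Set.Icc lo hi)
    (hb : b ∈ Set.Icc lo hi) : |α * a + (1 - α) * b - a| ≤ hi - lo := by
  have hmem := convex_comb_mem_Icc hα ha hb
  rw [abs_le]
  constructor <;> linarith [hmem.1, hmem.2, ha.1, ha.2]

lemma update_convex_comb_mem_Icc (hα : α ∈ Set.Icc (0 : ℝ) 1) {x : ι → ℝ}
    (hx : ∀ w, x w ∈ Set.Icc lo hi) {y : ℝ} (hy : y ∈ Set.Icc lo hi) (u w : ι) :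
    Function.update x u (α * x u + (1 - α) * y) w ∈ Set.Icc lo hi := by
  rcases eq_or_ne w u with rfl | hw
  · simpa using convex_comb_mem_Icc hα (hx w) hy
  · simpa [hw] using hx w

end Relaxation

lemma SimpleGraph.sum_sum_neighborFinset {V : Type*} [Fintype V] (G : SimpleGraph V)
    [DecidableRel G.Adj] (g : V → ℝ) :
    ∑ u, ∑ v ∈ G.neighborFinset u, g v = ∑ v, (G.degree v : ℝ) * g v := by
  rw [Finset.sum_comm' (t' := univ) (s' := fun v => G.neighborFinset v)
    (by simp [G.adj_comm])]
  simp only [Finset.sum_const, G.card_neighborFinset_eq_degree, nsmul_eq_mul]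

section NodeModel

variable {n : ℕ} (G : SimpleGraph (Fin n)) [DecidableRel G.Adj]

lemma nodeUpdate_eq_update (α : ℝ) (k : ℕ) (u : Fin n) (S : Finset (Fin n)) (x : Fin n → ℝ) :
    nodeUpdate α k (u, S) x
      = Function.update x u (α * x u + (1 - α) * ((∑ v ∈ S, x v) / k)) := by
  funext w
  rcases eq_or_ne w u with rfl | hw
  · simp only [nodeUpdate, if_true, Function.update_self]
    ring
  · simp [nodeUpdate, hw]

lemma Mdeg_nodeUpdate_sub (α : ℝ) (k : ℕ) (u : Fin n) (S : Finset (Fin n)) (x : Fin n → ℝ) :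
    Mdeg G (nodeUpdate α k (u, S) x) - Mdeg G x
      = piRW G u * (α * x u + (1 - α) * ((∑ v ∈ S, x v) / k) - x u) := by
  rw [nodeUpdate_eq_update]
  exact sum_mul_update_sub _ _ _ _

variable (hne : Nonempty (Fin n)) (k : ℕ) (hk : ∀ u, k ≤ G.degree u)

lemma ae_mem_powersetCard_nodeStepPMF :
    ∀ᵐ s ∂(nodeStepPMF G hne k hk).toMeasure, s.2 ∈ (G.neighborFinset s.1).powersetCard k := by
  refine ae_iff.2 ((PMF.toMeasure_apply_eq_zero_iff _ MeasurableSet.of_discrete).2 ?_)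
  refine Set.disjoint_left.2 fun s hs hbad => hbad ?_
  simp only [nodeStepPMF, PMF.support_bind, PMF.support_map, PMF.support_uniformOfFinset,
    Set.mem_iUnion, Set.mem_image] at hs
  obtain ⟨u, -, S, hS, rfl⟩ := hs
  exact hS

lemma integral_nodeStepPMF (g : NodeStep n → ℝ) :
    ∫ s, g s ∂(nodeStepPMF G hne k hk).toMeasure
      = (∑ u, (∑ S ∈ (G.neighborFinset u).powersetCard k, g (u, S))
          / (G.degree u).choose k) / n := by
  simp only [nodeStepPMF, PMF.integral_bind_toMeasure, PMF.integral_map_toMeasure,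
    PMF.integral_uniformOfFinset_toMeasure, PMF.uniformOfFintype_apply, card_powersetCard,
    G.card_neighborFinset_eq_degree, Fintype.card_fin, ENNReal.toReal_inv,
    ENNReal.toReal_natCast]
  rw [Finset.sum_div]
  exact Finset.sum_congr rfl fun u _ => by ring

lemma integral_Mdeg_nodeUpdate (hk1 : 1 ≤ k) (α : ℝ) (x : Fin n → ℝ) :
    ∫ s, Mdeg G (nodeUpdate α k s x) ∂(nodeStepPMF G hne k hk).toMeasure = Mdeg G x := by
  have hlocal : ∀ u, (∑ S ∈ (G.neighborFinset u).powersetCard k,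
      (Mdeg G (nodeUpdate α k (u, S) x) - Mdeg G x)) / (G.degree u).choose k
        = (1 - α) / (2 * #G.edgeFinset) * (∑ v ∈ G.neighborFinset u, x v - G.degree u * x u) := by
    intro u
    have hd : (G.degree u : ℝ) ≠ 0 := Nat.cast_ne_zero.2 (by have := hk u; omega)
    have hC : ((G.degree u).choose k : ℝ) ≠ 0 := by exact_mod_cast (Nat.choose_pos (hk u)).ne'
    have havg := (G.neighborFinset u).sum_powersetCard_average hk1
      (by simpa using hk u) x
    rw [G.card_neighborFinset_eq_degree] at havg
    simp_rw [Mdeg_nodeUpdate_sub, show ∀ a, piRW G u * (α * x u + (1 - α) * a - x u)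
      = piRW G u * (1 - α) * a - piRW G u * (1 - α) * x u from fun a => by ring]
    rw [Finset.sum_sub_distrib, ← Finset.mul_sum, Finset.sum_const, card_powersetCard,
      G.card_neighborFinset_eq_degree, nsmul_eq_mul, sub_div, mul_div_assoc, havg, piRW]
    field_simp
  have hdiff : ∫ s, (Mdeg G (nodeUpdate α k s x) - Mdeg G x) ∂(nodeStepPMF G hne k hk).toMeasure
      = 0 := by
    rw [integral_nodeStepPMF]
    simp only [hlocal]
    rw [← Finset.mul_sum, Finset.sum_sub_distrib, G.sum_sum_neighborFinset, sub_self, mul_zero,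
      zero_div]
  rwa [integral_sub Integrable.of_finite (integrable_const _), integral_const, probReal_univ,
    one_smul, sub_eq_zero] at hdiff

variable {k} {α lo hi : ℝ} {x : Fin n → ℝ} {u : Fin n} {S : Finset (Fin n)}

lemma nodeUpdate_mem_Icc (hα : α ∈ Set.Icc (0 : ℝ) 1) (hk1 : 1 ≤ k)
    (hx : ∀ w, x w ∈ Set.Icc lo hi) (hS : #S = k) (w : Fin n) :
    nodeUpdate α k (u, S) x w ∈ Set.Icc lo hi := by
  rw [nodeUpdate_eq_update]
  exact update_convex_comb_mem_Icc hα hx (Finset.sum_div_mem_Icc hS hk1 fun v _ => hx v) u w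

lemma abs_Mdeg_nodeUpdate_sub_le (hα : α ∈ Set.Icc (0 : ℝ) 1) (hk1 : 1 ≤ k)
    (hx : ∀ w, x w ∈ Set.Icc lo hi) (hS : #S = k) :
    |Mdeg G (nodeUpdate α k (u, S) x) - Mdeg G x|
      ≤ G.maxDegree * (hi - lo) / (2 * #G.edgeFinset) := by
  have hpi : |piRW G u| ≤ G.maxDegree / (2 * #G.edgeFinset) := by
    rw [piRW, abs_of_nonneg (by positivity)]
    gcongr
    exact_mod_cast G.degree_le_maxDegree u
  rw [Mdeg_nodeUpdate_sub, abs_mul, mul_div_right_comm]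
  exact mul_le_mul hpi (abs_convex_comb_sub_le hα (hx u)
    (Finset.sum_div_mem_Icc hS hk1 fun v _ => hx v)) (abs_nonneg _) (by positivity)

end NodeModel

section EdgeModel

variable {n : ℕ} (G : SimpleGraph (Fin n)) [DecidableRel G.Adj]

lemma edgeUpdate_eq_update (α : ℝ) (e : EdgeStep n) (x : Fin n → ℝ) :
    edgeUpdate α e x = Function.update x e.1 (α * x e.1 + (1 - α) * x e.2) := by
  funext w
  rcases eq_or_ne w e.1 with rfl | hw
  · simp [edgeUpdate]
  · simp [edgeUpdate, hw]

lemma Avg_edgeUpdate_sub (α : ℝ) (e : EdgeStep n) (x : Fin n → ℝ) :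
    Avg (edgeUpdate α e x) - Avg x = 1 / n * (α * x e.1 + (1 - α) * x e.2 - x e.1) := by
  simp only [Avg, Finset.mul_sum, edgeUpdate_eq_update]
  exact sum_mul_update_sub (fun _ => 1 / n) _ _ _

lemma ae_adj_edgeStepPMF (hconn : G.Connected) (hn : 1 < n) :
    ∀ᵐ e ∂(edgeStepPMF G hconn hn).toMeasure, G.Adj e.1 e.2 := by
  refine ae_iff.2 ((PMF.toMeasure_apply_eq_zero_iff _ MeasurableSet.of_discrete).2 ?_)
  refine Set.disjoint_left.2 fun e he hbad => hbad ?_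
  rw [edgeStepPMF, PMF.support_uniformOfFinset] at he
  simpa using he

lemma integral_Avg_edgeUpdate (hconn : G.Connected) (hn : 1 < n) (α : ℝ) (x : Fin n → ℝ) :
    ∫ e, Avg (edgeUpdate α e x) ∂(edgeStepPMF G hconn hn).toMeasure = Avg x := by
  set E := univ.filter fun e : EdgeStep n => G.Adj e.1 e.2
  have hswap : ∑ e ∈ E, x e.2 = ∑ e ∈ E, x e.1 :=
    Finset.sum_nbij' Prod.swap Prod.swap (by simp [E, G.adj_comm]) (by simp [E, G.adj_comm])
      (by simp) (by simp) (by simp)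
  have hdiff : ∫ e, (Avg (edgeUpdate α e x) - Avg x) ∂(edgeStepPMF G hconn hn).toMeasure = 0 := by
    simp only [edgeStepPMF, PMF.integral_uniformOfFinset_toMeasure, Avg_edgeUpdate_sub,
      show ∀ e : EdgeStep n, α * x e.1 + (1 - α) * x e.2 - x e.1 = (1 - α) * (x e.2 - x e.1)
        from fun e => by ring]
    rw [← Finset.mul_sum, ← Finset.mul_sum, Finset.sum_sub_distrib, hswap, sub_self, mul_zero,
      mul_zero, zero_div]
  rwa [integral_sub Integrable.of_finite (integrable_const _), integral_const, probReal_univ,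
    one_smul, sub_eq_zero] at hdiff

variable {α lo hi : ℝ} {x : Fin n → ℝ}

lemma edgeUpdate_mem_Icc (hα : α ∈ Set.Icc (0 : ℝ) 1) (hx : ∀ w, x w ∈ Set.Icc lo hi)
    (e : EdgeStep n) (w : Fin n) : edgeUpdate α e x w ∈ Set.Icc lo hi := by
  rw [edgeUpdate_eq_update]
  exact update_convex_comb_mem_Icc hα hx (hx e.2) e.1 w

lemma abs_Avg_edgeUpdate_sub_le (hα : α ∈ Set.Icc (0 : ℝ) 1) (hx : ∀ w, x w ∈ Set.Icc lo hi)
    (e : EdgeStep n) : |Avg (edgeUpdate α e x) - Avg x| ≤ (hi - lo) / n := by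
  rw [Avg_edgeUpdate_sub, abs_mul, abs_of_nonneg (by positivity), one_div_mul_eq_div]
  gcongr
  exact abs_convex_comb_sub_le hα (hx e.1) (hx e.2)

end EdgeModel

/-- **Corollary 1(ii)–(iii) (time-dependent variance bounds).**
Let `K = max_u ξ_u(0) - min_u ξ_u(0)` be the initial discrepancy. Then:
(a) in the Node Model on a connected graph `G` with maximum degree `d_max`, the
degree-weighted average `M(t) = Σ_u (d_u/(2m)) ξ_u(t)` satisfies
`Var(M(t)) ≤ t ( d_max K/(2m) )²` for all `t ≥ 0`; and
(b) in the Edge Model on a connected graph `G`, the average `Avg(t) = (1/n) Σ_u ξ_u(t)`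
satisfies `Var(Avg(t)) ≤ (t/n²) K²` for all `t ≥ 0`. -/
theorem variance_time_dependent_bounds {n : ℕ} (hn : 1 < n)
    (G : SimpleGraph (Fin n)) [DecidableRel G.Adj] (hconn : G.Connected)
    (α : ℝ) (hα : α ∈ Set.Ioo (0 : ℝ) 1)
    (k : ℕ) (hk1 : 1 ≤ k) (hk : ∀ u, k ≤ G.degree u)
    (ξ0 : Fin n → ℝ)
    (K : ℝ)
    (hK : K = Finset.univ.sup' ⟨⟨0, by omega⟩, Finset.mem_univ _⟩ ξ0 -
              Finset.univ.inf' ⟨⟨0, by omega⟩, Finset.mem_univ _⟩ ξ0)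
    (Ω : Type) (mΩ : MeasurableSpace Ω) (Pr : Measure Ω) (hPr : IsProbabilityMeasure Pr)
    (steps : ℕ → Ω → NodeStep n) (hmeas : ∀ t, Measurable (steps t))
    (hiid : iIndepFun steps Pr)
    (hdist : ∀ t, Measure.map (steps t) Pr = (nodeStepPMF G hconn.nonempty k hk).toMeasure)
    (Ω' : Type) (mΩ' : MeasurableSpace Ω') (Pr' : Measure Ω')
    (hPr' : IsProbabilityMeasure Pr')
    (steps' : ℕ → Ω' → EdgeStep n) (hmeas' : ∀ t, Measurable (steps' t))
    (hiid' : iIndepFun steps' Pr')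
    (hdist' : ∀ t, Measure.map (steps' t) Pr' = (edgeStepPMF G hconn hn).toMeasure) :
    (∀ t : ℕ,
        variance (fun ω => Mdeg G (nodeTraj α k ξ0 (fun s => steps s ω) t)) Pr ≤
          (t : ℝ) * ((G.maxDegree : ℝ) * K / (2 * (G.edgeFinset.card : ℝ))) ^ 2) ∧
    (∀ t : ℕ,
        variance (fun ω => Avg (edgeTraj α ξ0 (fun s => steps' s ω) t)) Pr' ≤
          ((t : ℝ) / (n : ℝ) ^ 2) * K ^ 2) := by
  set lo := Finset.univ.inf' ⟨⟨0, by omega⟩, Finset.mem_univ _⟩ ξ0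
  set hi := Finset.univ.sup' ⟨⟨0, by omega⟩, Finset.mem_univ _⟩ ξ0
  have hξ0 : ∀ w, ξ0 w ∈ Set.Icc lo hi :=
    fun w => ⟨Finset.inf'_le _ (Finset.mem_univ w), Finset.le_sup' _ (Finset.mem_univ w)⟩
  have hα' : α ∈ Set.Icc (0 : ℝ) 1 := Set.Ioo_subset_Icc_self hα
  subst hK
  refine ⟨fun t => ?_, fun t => ?_⟩
  · exact variance_le_of_martingale_increments_le ξ0 (nodeUpdate α k) hmeas hiid hdist
      (nodeTraj α k ξ0) (fun _ => rfl) (fun _ _ => rfl)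
      (ae_mem_powersetCard_nodeStepPMF G hconn.nonempty k hk) hξ0
      (fun _ hx _ hs => nodeUpdate_mem_Icc hα' hk1 hx (Finset.mem_powersetCard.1 hs).2)
      (fun x _ => integral_Mdeg_nodeUpdate G hconn.nonempty k hk hk1 α x)
      (fun _ hx _ hs => abs_Mdeg_nodeUpdate_sub_le G hα' hk1 hx (Finset.mem_powersetCard.1 hs).2)
      t
  · calc _ ≤ t * ((hi - lo) / n) ^ 2 :=
          variance_le_of_martingale_increments_le ξ0 (edgeUpdate α) hmeas' hiid' hdist'
            (edgeTraj α ξ0) (fun _ => rfl) (fun _ _ => rfl) (ae_adj_edgeStepPMF G hconn hn) hξ0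
            (fun _ hx e _ => edgeUpdate_mem_Icc hα' hx e)
            (fun x _ => integral_Avg_edgeUpdate G hconn hn α x)
            (fun _ hx e _ => abs_Avg_edgeUpdate_sub_le hα' hx e) t
      _ = _ := by ring
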